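/- Let X be a quandle, G_X its enveloping group, G an abelian group with a left G_X-action by automorphisms, and κ : X × X → G any family. Let w be a braid word on k strands, acting on pairs (color vector, bead vector) in X^k × G^k as follows: σ_j replaces (x_j, x_{j+1}) by (x_{j+1}, x_j * x_{j+1}) and (a_j, a_{j+1}) by (a_{j+1}, x_{j+1}·a_j + a_{j+1} − (x_j*x_{j+1})·a_{j+1} + κ_{x_j,x_{j+1}}), and σ_j^{−1} applies the inverse transformation. Suppose a coloring of the closed braid is given, i.e. a bottom color vector x⃗ ∈ X^k whose induced top color vector equals x⃗, and suppose this coloring extends to the extension quandle G ×_α X, i.e. there is a⃗ ∈ G^k such that w sends (x⃗, a⃗) to (x⃗, a⃗). Then the sum over all letters of w of the Boltzmann weights is zero, where the Boltzmann weight of a letter σ_j^{ε} with color vector x⃗' immediately below it is ε·(x'_k·…·x'_{j+2})·κ_{u,v}, with (u,v) = (x'_j, x'_{j+1}) if ε = +1 and (u,v) = (x'_{j+1} \bar{*} x'_j, x'_j) if ε = −1. In other words, a coloring that extends to the extension contributes a trivial term to the generalized quandle cocycle invariant. -/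

import Mathlib

open Quandles

/-- The canonical map from a quandle to its enveloping group. -/
def iota (X : Type*) [Quandle X] (x : X) : Rack.EnvelGroup X := Rack.toEnvelGroup X x

/-- The bead transformation with 2-cochain `κ` of the braid generator `σ_j` (strands are
indexed `0, 1, 2, …`): colors transform by `(x_j, x_{j+1}) ↦ (x_{j+1}, x_j * x_{j+1})`
(the paper's `x_j * x_{j+1}` is Mathlib's `x_{j+1} ◃ x_j`), and beads by
`(a_j,a_{j+1}) ↦ (a_{j+1}, x_{j+1}·a_j + a_{j+1} − (x_j*x_{j+1})·a_{j+1} + κ_{x_j,x_{j+1}})`. -/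
def posStep {X G : Type*} [Quandle X] [AddCommGroup G]
    [DistribMulAction (Rack.EnvelGroup X) G] (κ : X → X → G)
    (j : ℕ) (s : (ℕ → X) × (ℕ → G)) : (ℕ → X) × (ℕ → G) :=
  (Function.update (Function.update s.1 j (s.1 (j + 1))) (j + 1) (s.1 (j + 1) ◃ s.1 j),
   Function.update (Function.update s.2 j (s.2 (j + 1))) (j + 1)
     (iota X (s.1 (j + 1)) • s.2 j + s.2 (j + 1) -
       iota X (s.1 (j + 1) ◃ s.1 j) • s.2 (j + 1) + κ (s.1 j) (s.1 (j + 1))))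

/-- Transformation associated to a braid word, applied letter by letter from bottom to
top; a letter `(j, true)` is `σ_j` and `(j, false)` is `σ_j⁻¹`. -/
def wordAction {σ : Type*} (pos neg : ℕ → σ → σ) : List (ℕ × Bool) → σ → σ
  | [], s => s
  | l :: w, s => wordAction pos neg w ((if l.2 then pos l.1 else neg l.1) s)

/-- The coefficient `x_{k-1}·x_{k-2}·…·x_{i+1}` (descending, in the enveloping group)
of the `i`-th bead in the weighted sum on `k` strands. -/
def coeff {X : Type*} [Quandle X] (k i : ℕ) (x : ℕ → X) : Rack.EnvelGroup X :=
  ((List.range (k - 1 - i)).map fun m => iota X (x (k - 1 - m))).prod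

/-- The weighted sum `WS_{x⃗}(a⃗) = Σ_i (x_{k-1}·…·x_{i+1})·a_i`. -/
def weightedSum {X G : Type*} [Quandle X] [AddCommGroup G]
    [DistribMulAction (Rack.EnvelGroup X) G]
    (k : ℕ) (s : (ℕ → X) × (ℕ → G)) : G :=
  ∑ i ∈ Finset.range k, coeff k i s.1 • s.2 i

/-- The Boltzmann weight of a letter `σ_j^ε` whose color vector immediately below it is
`x⃗`:  `ε·(x_{k-1}·…·x_{j+2})·κ_{u,v}` with `(u,v) = (x_j, x_{j+1})` if `ε = +1` and
`(u,v) = (x_{j+1} \bar{*} x_j, x_j)` if `ε = −1` (the paper's `c \bar{*} b` is Mathlib's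
`b ◃⁻¹ c`). -/
def letterWeight {X G : Type*} [Quandle X] [AddCommGroup G]
    [DistribMulAction (Rack.EnvelGroup X) G] (κ : X → X → G)
    (k : ℕ) (x : ℕ → X) : ℕ × Bool → G
  | (j, true) => coeff k (j + 1) x • κ (x j) (x (j + 1))
  | (j, false) => -(coeff k (j + 1) x • κ (x j ◃⁻¹ x (j + 1)) (x j))

/-- The sum of the Boltzmann weights of all the letters of a braid word, starting from a
given bottom state. -/
def totalWeight {X G : Type*} [Quandle X] [AddCommGroup G]
    [DistribMulAction (Rack.EnvelGroup X) G] (κ : X → X → G)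
    (pos neg : ℕ → (ℕ → X) × (ℕ → G) → (ℕ → X) × (ℕ → G)) (k : ℕ) :
    List (ℕ × Bool) → (ℕ → X) × (ℕ → G) → G
  | [], _ => 0
  | l :: w, s =>
      letterWeight κ k s.1 l +
        totalWeight κ pos neg k w ((if l.2 then pos l.1 else neg l.1) s)

/-! The weighted sum `WS_{x⃗}(a⃗)` changes under each letter `σ_j^{±1}` by exactly the
Boltzmann weight of that letter; the coefficients of the beads other than `a_j, a_{j+1}` are
preserved because `(x_j * x_{j+1})·x_{j+1} = x_{j+1}·x_j` in `G_X`. Hence the total weight of a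
braid word telescopes to `WS(top) − WS(bottom)`, which vanishes when the word fixes the state. -/

section WeightedSum

variable {X G : Type*} [Quandle X] [AddCommGroup G]
  [DistribMulAction (Rack.EnvelGroup X) G] (κ : X → X → G)

lemma iota_act (x y : X) : iota X (x ◃ y) = iota X x * iota X y * (iota X x)⁻¹ :=
  (Rack.toEnvelGroup X).map_act'

lemma coeff_congr {k i : ℕ} {x y : ℕ → X} (h : ∀ m, i < m → x m = y m) :
    coeff k i x = coeff k i y := by
  unfold coeff
  congr 1
  refine List.map_congr_left fun m hm => ?_
  rw [List.mem_range] at hm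
  rw [h _ (by omega)]

lemma coeff_eq_coeff_succ_mul {k i : ℕ} (h : i + 1 < k) (x : ℕ → X) :
    coeff k i x = coeff k (i + 1) x * iota X (x (i + 1)) := by
  unfold coeff
  rw [show k - 1 - i = k - 1 - (i + 1) + 1 by omega, List.range_succ, List.map_append,
    List.prod_append]
  simp [show k - 1 - (k - 1 - (i + 1)) = i + 1 by omega]

lemma coeff_congr_of_le {k i p : ℕ} {x y : ℕ → X} (hp : p < k) (hip : i ≤ p)
    (hcoeff : coeff k p x = coeff k p y) (h : ∀ m, i < m → m ≤ p → x m = y m) :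
    coeff k i x = coeff k i y := by
  induction hip using Nat.decreasingInduction with
  | self => exact hcoeff
  | of_succ n hn ih =>
    rw [coeff_eq_coeff_succ_mul (by omega) x, coeff_eq_coeff_succ_mul (by omega) y,
      ih fun m hm hmp => h m (by omega) hmp, h (n + 1) (by omega) hn]

variable (j : ℕ) (s : (ℕ → X) × (ℕ → G))

lemma posStep_fst_of_ne {m : ℕ} (h₀ : m ≠ j) (h₁ : m ≠ j + 1) :
    (posStep κ j s).1 m = s.1 m := by
  simp [posStep, h₀, h₁]

lemma posStep_snd_of_ne {m : ℕ} (h₀ : m ≠ j) (h₁ : m ≠ j + 1) :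
    (posStep κ j s).2 m = s.2 m := by
  simp [posStep, h₀, h₁]

lemma posStep_fst_self : (posStep κ j s).1 j = s.1 (j + 1) := by
  simp [posStep]

lemma posStep_fst_succ : (posStep κ j s).1 (j + 1) = s.1 (j + 1) ◃ s.1 j := by
  simp [posStep]

lemma posStep_snd_self : (posStep κ j s).2 j = s.2 (j + 1) := by
  simp [posStep]

lemma posStep_snd_succ : (posStep κ j s).2 (j + 1) =
    iota X (s.1 (j + 1)) • s.2 j + s.2 (j + 1) -
      iota X (s.1 (j + 1) ◃ s.1 j) • s.2 (j + 1) + κ (s.1 j) (s.1 (j + 1)) := by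
  simp [posStep]

variable {j}

lemma coeff_posStep_of_gt {k i : ℕ} (h : j < i) :
    coeff k i (posStep κ j s).1 = coeff k i s.1 :=
  coeff_congr fun _ hm => posStep_fst_of_ne κ j s (by omega) (by omega)

lemma coeff_posStep_self {k : ℕ} (h : j + 2 ≤ k) :
    coeff k j (posStep κ j s).1 = coeff k (j + 1) s.1 * iota X (s.1 (j + 1) ◃ s.1 j) := by
  rw [coeff_eq_coeff_succ_mul (by omega), coeff_posStep_of_gt κ s (Nat.lt_succ_self j),
    posStep_fst_succ]

lemma coeff_posStep_of_lt {k i : ℕ} (h : j + 2 ≤ k) (hij : i < j) :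
    coeff k i (posStep κ j s).1 = coeff k i s.1 := by
  refine coeff_congr_of_le (p := j - 1) (by omega) (by omega) ?_
    fun m _ hm => posStep_fst_of_ne κ j s (by omega) (by omega)
  have hj : j - 1 + 1 = j := by omega
  rw [coeff_eq_coeff_succ_mul (i := j - 1) (by omega), hj, coeff_posStep_self κ s h,
    posStep_fst_self, coeff_eq_coeff_succ_mul (i := j - 1) (by omega), hj,
    coeff_eq_coeff_succ_mul (i := j) (by omega), iota_act]
  group

lemma weightedSum_posStep {k : ℕ} (h : j + 2 ≤ k) :
    weightedSum k (posStep κ j s) = weightedSum k s + letterWeight κ k s.1 (j, true) := by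
  have hsupp : ∀ i ∈ Finset.range k, i ≠ j ∧ i ≠ j + 1 →
      coeff k i (posStep κ j s).1 • (posStep κ j s).2 i - coeff k i s.1 • s.2 i = 0 := by
    rintro i - ⟨hij, hij'⟩
    rw [posStep_snd_of_ne κ j s hij hij', sub_eq_zero]
    rcases Nat.lt_or_gt_of_ne hij with hlt | hgt
    · rw [coeff_posStep_of_lt κ s h hlt]
    · rw [coeff_posStep_of_gt κ s hgt]
  have hdiff := Finset.sum_eq_add_of_mem j (j + 1) (Finset.mem_range.2 (by omega))
    (Finset.mem_range.2 h) (Nat.succ_ne_self j).symm hsupp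
  rw [Finset.sum_sub_distrib, sub_eq_iff_eq_add] at hdiff
  rw [weightedSum, weightedSum, hdiff, coeff_posStep_self κ s h, coeff_posStep_of_gt κ s
    (Nat.lt_succ_self j), posStep_snd_self, posStep_snd_succ, coeff_eq_coeff_succ_mul h,
    letterWeight]
  simp only [mul_smul, smul_add, smul_sub]
  abel

lemma letterWeight_posStep_false (k : ℕ) :
    letterWeight κ k (posStep κ j s).1 (j, false) = -letterWeight κ k s.1 (j, true) := by
  rw [letterWeight, letterWeight, coeff_posStep_of_gt κ s (Nat.lt_succ_self j),
    posStep_fst_self, posStep_fst_succ, Rack.invAct_act_eq]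

lemma weightedSum_neg {k : ℕ} (h : j + 2 ≤ k)
    {neg : ℕ → (ℕ → X) × (ℕ → G) → (ℕ → X) × (ℕ → G)}
    (hneg : Function.RightInverse (neg j) (posStep κ j)) :
    weightedSum k (neg j s) = weightedSum k s + letterWeight κ k s.1 (j, false) := by
  conv_rhs => rw [← hneg s, weightedSum_posStep κ _ h, letterWeight_posStep_false]
  abel

lemma totalWeight_eq_weightedSum_sub {k : ℕ}
    {neg : ℕ → (ℕ → X) × (ℕ → G) → (ℕ → X) × (ℕ → G)}
    (hneg : ∀ j, Function.RightInverse (neg j) (posStep κ j))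
    {w : List (ℕ × Bool)} (hw : ∀ l ∈ w, l.1 + 2 ≤ k) (s : (ℕ → X) × (ℕ → G)) :
    totalWeight κ (posStep κ) neg k w s =
      weightedSum k (wordAction (posStep κ) neg w s) - weightedSum k s := by
  induction w generalizing s with
  | nil => simp [totalWeight, wordAction]
  | cons l w ih =>
    obtain ⟨j, b⟩ := l
    have hj : j + 2 ≤ k := hw (j, b) List.mem_cons_self
    rw [totalWeight, wordAction, ih (fun l hl => hw l (List.mem_cons_of_mem _ hl))]
    cases b
    · rw [if_neg Bool.false_ne_true, weightedSum_neg κ s hj (hneg j)]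
      abel
    · rw [if_pos rfl, weightedSum_posStep κ s hj]
      abel

end WeightedSum

theorem extendable_coloring_totalWeight_eq_zero_general
    {X G : Type*} [Quandle X] [AddCommGroup G]
    [DistribMulAction (Rack.EnvelGroup X) G] (κ : X → X → G)
    (k : ℕ) (neg : ℕ → (ℕ → X) × (ℕ → G) → (ℕ → X) × (ℕ → G))
    (hneg : ∀ j : ℕ, Function.LeftInverse (neg j) (posStep κ j) ∧
      Function.RightInverse (neg j) (posStep κ j))
    (w : List (ℕ × Bool)) (hw : ∀ l ∈ w, l.1 + 2 ≤ k)
    (x : ℕ → X) (a : ℕ → G)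
    (hext : wordAction (posStep κ) neg w (x, a) = (x, a)) :
    totalWeight κ (posStep κ) neg k w (x, a) = 0 := by
  rw [totalWeight_eq_weightedSum_sub κ (fun j => (hneg j).2) hw, hext, sub_self]

/-- If a coloring of a closed braid (a bottom color vector `x⃗` whose induced top color
vector is again `x⃗`) extends to the extension quandle `G ×_α X`, i.e. there is a bead
vector `a⃗` with the braid word sending `(x⃗, a⃗)` to itself, then the sum of the
Boltzmann weights of all letters vanishes: such a coloring contributes a trivial term to
the generalized quandle cocycle invariant. -/
theorem extendable_coloring_totalWeight_eq_zero
    {X G : Type*} [Quandle X] [AddCommGroup G]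
    [DistribMulAction (Rack.EnvelGroup X) G] (κ : X → X → G)
    (k : ℕ) (neg : ℕ → (ℕ → X) × (ℕ → G) → (ℕ → X) × (ℕ → G))
    (hneg : ∀ j : ℕ, Function.LeftInverse (neg j) (posStep κ j) ∧
      Function.RightInverse (neg j) (posStep κ j))
    (w : List (ℕ × Bool)) (hw : ∀ l ∈ w, l.1 + 2 ≤ k)
    (x : ℕ → X) (a : ℕ → G)
    (hcolor : (wordAction (posStep κ) neg w (x, a)).1 = x)
    (hext : wordAction (posStep κ) neg w (x, a) = (x, a)) :
    totalWeight κ (posStep κ) neg k w (x, a) = 0 :=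
  extendable_coloring_totalWeight_eq_zero_general κ k neg hneg w hw x a hext
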